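/- arXiv:2602.16556 — 3 statements merged into one kernel-verified Lean document; each statement's English description precedes it below -/
import Mathlib

section
/- Let Z be a finite set with |Z| > n and let Q denote the poset of all subsets of Z ordered by inclusion. If there exists an order-embedding φ of the Boolean lattice Q_n (subsets of [n] ordered by inclusion) into Q, then there exists a subset X ⊆ Z with |X| = n and an order-embedding φ' of the Boolean lattice on X into Q with the same image as φ, satisfying φ'(S) ∩ X = S for all S ⊆ X. -/
/-!
For each `i`, an order embedding `φ` of the subsets of `ι` cannot map `{i}` into `φ {i}ᶜ`, so some
element `x i` lies in `φ {i}` but not in `φ {i}ᶜ`. Monotonicity then gives `x i ∈ φ S ↔ i ∈ S`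
for every `S`, so `x` is injective and `X = x(ι)` meets `φ S` exactly in `x(S)`. Re-indexing `φ`
along `x` gives the required embedding of the subsets of `X`.
-/

open Finset

theorem exists_forall_mem_iff_of_subset_iff {ι α : Type*} [Fintype ι] [DecidableEq ι]
    {φ : Finset ι → Finset α} (hφ : ∀ S T, S ⊆ T ↔ φ S ⊆ φ T) :
    ∃ x : ι → α, ∀ i S, x i ∈ φ S ↔ i ∈ S := by
  have hsep : ∀ i, ∃ a ∈ φ {i}, a ∉ φ {i}ᶜ := fun i => not_subset.1 <| by
    rw [← hφ]
    simp
  choose x hxi hxc using hsep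
  refine ⟨x, fun i S => ⟨fun hxS => ?_, fun hiS => ?_⟩⟩
  · by_contra hiS
    have hS : S ⊆ {i}ᶜ := fun j hj => by simpa using ne_of_mem_of_not_mem hj hiS
    exact hxc i ((hφ S _).1 hS hxS)
  · exact (hφ {i} S).1 (singleton_subset_iff.2 hiS) (hxi i)

theorem injective_of_forall_mem_iff {ι α : Type*} {φ : Finset ι → Finset α} {x : ι → α}
    (hx : ∀ i S, x i ∈ φ S ↔ i ∈ S) : Function.Injective x := fun i j hij => by
  simpa using (hx i {j}).1 (hij ▸ (hx j {j}).2 (mem_singleton_self j))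

theorem inter_image_univ_of_forall_mem_iff {ι α : Type*} [Fintype ι] [DecidableEq α]
    {φ : Finset ι → Finset α} {x : ι → α} (hx : ∀ i S, x i ∈ φ S ↔ i ∈ S) (S : Finset ι) :
    φ S ∩ univ.image x = S.image x := by
  ext a
  simp only [mem_inter, mem_image, mem_univ, true_and]
  constructor
  · rintro ⟨ha, i, rfl⟩
    exact ⟨i, (hx i S).1 ha, rfl⟩
  · rintro ⟨i, hi, rfl⟩
    exact ⟨(hx i S).2 hi, i, rfl⟩

theorem Function.Injective.filter_mem_image_eq {ι α : Type*} [Fintype ι] [DecidableEq α]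
    {x : ι → α} (hinj : Function.Injective x) (S : Finset ι) :
    univ.filter (fun i => x i ∈ S.image x) = S := by
  ext i
  simp [hinj.mem_finset_image]

theorem stmt0_general {α : Type*} [DecidableEq α] (n : ℕ) (Z : Finset α)
    (φ : Finset (Fin n) → Finset α)
    (hφZ : ∀ S, φ S ⊆ Z)
    (hφ : ∀ S T, S ⊆ T ↔ φ S ⊆ φ T) :
    ∃ (X : Finset α) (φ' : Finset α → Finset α),
      X ⊆ Z ∧ X.card = n ∧
      (∀ A B, A ⊆ X → B ⊆ X → (A ⊆ B ↔ φ' A ⊆ φ' B)) ∧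
      (∀ A, A ⊆ X → ∃ S, φ' A = φ S) ∧
      (∀ S, ∃ A, A ⊆ X ∧ φ' A = φ S) ∧
      (∀ A, A ⊆ X → φ' A ∩ X = A) := by
  obtain ⟨x, hx⟩ := exists_forall_mem_iff_of_subset_iff hφ
  have hinj := injective_of_forall_mem_iff hx
  have hφ' (S : Finset (Fin n)) : φ (univ.filter (fun i => x i ∈ S.image x)) = φ S := by
    rw [hinj.filter_mem_image_eq]
  refine ⟨univ.image x, fun A => φ (univ.filter (fun i => x i ∈ A)), ?_, ?_, ?_,
    fun A _ => ⟨_, rfl⟩, fun S => ⟨S.image x, image_subset_image (subset_univ S), hφ' S⟩, ?_⟩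
  · simpa only [image_subset_iff] using fun i _ => hφZ {i} ((hx i {i}).2 (mem_singleton_self i))
  · rw [card_image_of_injective _ hinj, card_univ, Fintype.card_fin]
  · intro A B hA hB
    obtain ⟨S, -, rfl⟩ := subset_image_iff.1 hA
    obtain ⟨T, -, rfl⟩ := subset_image_iff.1 hB
    dsimp only
    rw [hφ', hφ', image_subset_image_iff hinj, hφ]
  · intro A hA
    obtain ⟨S, -, rfl⟩ := subset_image_iff.1 hA
    dsimp only
    rw [hφ', inter_image_univ_of_forall_mem_iff hx]

/-- Axenovich–Walzer: an embedding of the Boolean lattice `Q_n` into the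
subsets of a ground set `Z` with `|Z| > n` can be re-parametrised over a
subset `X ⊆ Z` with `|X| = n`, with the same image, so that
`φ'(S) ∩ X = S` for all `S ⊆ X`. -/
theorem stmt0 {α : Type*} [DecidableEq α] (n : ℕ) (Z : Finset α) (hZ : n < Z.card)
    (φ : Finset (Fin n) → Finset α)
    (hφZ : ∀ S, φ S ⊆ Z)
    (hφ : ∀ S T, S ⊆ T ↔ φ S ⊆ φ T) :
    ∃ (X : Finset α) (φ' : Finset α → Finset α),
      X ⊆ Z ∧ X.card = n ∧
      (∀ A B, A ⊆ X → B ⊆ X → (A ⊆ B ↔ φ' A ⊆ φ' B)) ∧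
      (∀ A, A ⊆ X → ∃ S, φ' A = φ S) ∧
      (∀ S, ∃ A, A ⊆ X ∧ φ' A = φ S) ∧
      (∀ A, A ⊆ X → φ' A ∩ X = A) :=
  stmt0_general n Z φ hφZ hφ
end

section
/- Let n be divisible by 60, c = 1/3, h = 0.05, N = (2+c)n, t = 2n/3 + cn/2 + hn. For any R, Y ⊆ [N] with |R| = N/2, |Y| = n, |R ∩ Y| = 2n/3, the family K_t(R,Y) = {T ⊆ [N] : |T| = t, T ∩ Y ⊆ R ∩ Y, R \ Y ⊆ T \ Y, |T ∩ Y| ≥ n/3} has size at least binom(2n/3, n/3) · binom(2n/3 + cn/2, hn). -/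
/-!
Every `T = (R \ Y) ∪ A ∪ B` with `A ⊆ R ∩ Y`, `|A| = n/3`, and `B` avoiding `R ∪ Y`, `|B| = n/20`,
lies in the cone, and `(A, B)` is recovered from `T` as `T ∩ Y` and `T \ (R ∪ Y)`. With the given
sizes, `|R ∩ Y| = 2n/3` and `|[N] \ (R ∪ Y)| = 2n/3 + n/6`.
-/

open Finset

namespace Finset

variable {α : Type*} [DecidableEq α]

/-- The family `K_t(R,Y)` with the lower bound `k` on `|T ∩ Y|` as a parameter. -/
def cone [Fintype α] (t k : ℕ) (R Y : Finset α) : Finset (Finset α) :=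
  (univ : Finset α).powerset.filter fun T =>
    #T = t ∧ T ∩ Y ⊆ R ∩ Y ∧ R \ Y ⊆ T \ Y ∧ k ≤ #(T ∩ Y)

section

variable {R Y A B : Finset α}

theorem sdiff_union_union_inter_right (hA : A ⊆ R ∩ Y) (hB : Disjoint B (R ∪ Y)) :
    (R \ Y ∪ A ∪ B) ∩ Y = A := by
  rw [subset_inter_iff] at hA
  rw [disjoint_union_right] at hB
  ext x
  have : x ∈ A → x ∈ Y := fun h => hA.2 h
  have : x ∈ B → x ∉ Y := fun h => hB.2.notMem_of_mem_left_finset h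
  simp only [mem_inter, mem_union, mem_sdiff]
  tauto

theorem sdiff_union_union_sdiff_union (hA : A ⊆ R ∩ Y) (hB : Disjoint B (R ∪ Y)) :
    (R \ Y ∪ A ∪ B) \ (R ∪ Y) = B := by
  rw [subset_inter_iff] at hA
  ext x
  have : x ∈ A → x ∈ R := fun h => hA.1 h
  have : x ∈ B → x ∉ R ∪ Y := fun h => hB.notMem_of_mem_left_finset h
  simp only [mem_sdiff, mem_union] at this ⊢
  tauto

theorem card_sdiff_union_union (hA : A ⊆ R ∩ Y) (hB : Disjoint B (R ∪ Y)) :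
    #(R \ Y ∪ A ∪ B) = #(R \ Y) + #A + #B := by
  rw [subset_inter_iff] at hA
  have hRA : Disjoint (R \ Y) A := disjoint_of_subset_right hA.2 sdiff_disjoint
  have hRAB : Disjoint (R \ Y ∪ A) B :=
    (disjoint_of_subset_left (union_subset (sdiff_subset.trans subset_union_left)
      (hA.1.trans subset_union_left)) hB.symm)
  rw [card_union_of_disjoint hRAB, card_union_of_disjoint hRA]

end

theorem choose_mul_choose_le_card_cone [Fintype α] (R Y : Finset α) (a b : ℕ) :
    (#(R ∩ Y)).choose a * (#(R ∪ Y)ᶜ).choose b ≤ #(cone (#(R \ Y) + a + b) a R Y) := by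
  rw [← card_powersetCard, ← card_powersetCard, ← card_product]
  have mem {A B : Finset α} (h : (A, B) ∈ powersetCard a (R ∩ Y) ×ˢ powersetCard b (R ∪ Y)ᶜ) :
      A ⊆ R ∩ Y ∧ #A = a ∧ Disjoint B (R ∪ Y) ∧ #B = b := by
    simp only [mem_product, mem_powersetCard, subset_compl_iff_disjoint_right] at h
    exact ⟨h.1.1, h.1.2, h.2⟩
  refine card_le_card_of_injOn (fun p => R \ Y ∪ p.1 ∪ p.2) ?_ ?_
  · rintro ⟨A, B⟩ h
    obtain ⟨hA, rfl, hB, rfl⟩ := mem h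
    simp only [cone, coe_filter, Set.mem_ofPred_eq, mem_powerset, subset_univ, true_and,
      sdiff_union_union_inter_right hA hB, card_sdiff_union_union hA hB]
    exact ⟨hA, fun x hx => mem_sdiff.2 ⟨mem_union_left _ (mem_union_left _ hx), (mem_sdiff.1 hx).2⟩,
      le_rfl⟩
  · rintro ⟨A, B⟩ h ⟨A', B'⟩ h' heq
    obtain ⟨hA, -, hB, -⟩ := mem h
    obtain ⟨hA', -, hB', -⟩ := mem h'
    simp only at heq
    refine Prod.ext ?_ ?_
    · rw [← sdiff_union_union_inter_right hA hB, heq, sdiff_union_union_inter_right hA' hB']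
    · rw [← sdiff_union_union_sdiff_union hA hB, heq, sdiff_union_union_sdiff_union hA' hB']

end Finset

/-- The `t`-cone `K_t(R,Y)` has size at least
`binom(2n/3, n/3) · binom(2n/3 + n/6, n/20)`. Here `60 ∣ n`, `N = 7n/3`,
`t = 2n/3 + n/6 + n/20`, `|R| = N/2`, `|Y| = n`, `|R ∩ Y| = 2n/3`. -/
theorem stmt7 (n N : ℕ) (h60 : 60 ∣ n) (hN : 3 * N = 7 * n)
    (R Y : Finset (Fin N)) (hR : 2 * R.card = N) (hY : Y.card = n)
    (hRY : (R ∩ Y).card = 2 * n / 3) :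
    (2*n/3).choose (n/3) * (2*n/3 + n/6).choose (n/20) ≤
      ((Finset.univ : Finset (Fin N)).powerset.filter
        (fun T => T.card = 2*n/3 + n/6 + n/20 ∧ T ∩ Y ⊆ R ∩ Y ∧ R \ Y ⊆ T \ Y ∧
          n/3 ≤ (T ∩ Y).card)).card := by
  have hsdiff : #(R \ Y) = n/2 := by
    have := card_sdiff_add_card_inter R Y
    omega
  have hcompl : #(R ∪ Y)ᶜ = 2*n/3 + n/6 := by
    have := card_union_add_card_inter R Y
    rw [card_compl, Fintype.card_fin]
    omega
  have key := choose_mul_choose_le_card_cone R Y (n/3) (n/20)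
  rwa [hRY, hcompl, hsdiff, show n/2 + n/3 + n/20 = 2*n/3 + n/6 + n/20 by omega] at key
end

section
/- Suppose there exist families S₁ ⊆ [N]^(s) and T₁ ⊆ [N]^(t) satisfying the pivot conditions of Lemma (pivot_points), where N = (2+c)n with c = 1/3, s = 2n/3, t = 2n/3 + cn/2 + hn. Then the families S₂ = {[N]\T : T ∈ T₁} and T₂ = {[N]\S : S ∈ S₁} satisfy: (i) no S ∈ S₂ is a subset of any T ∈ T₂; (ii) for any P, X ⊆ [N] with |P| = N/2, |X| = n, |P ∩ X| = n/3, there exists S ∈ S₂ with P ∩ X ⊆ S ∩ X, S \ X ⊆ P \ X, and |S ∩ X| ≤ 2n/3; (iii) for any P, X ⊆ [N] with |P| = N − n/3, |X| = n, X ⊆ P, there exists T ∈ T₂ with T ∩ X ⊆ P ∩ X, P \ X ⊆ T \ X, and |T ∩ X| ≥ 2n/3. -/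
/-!
Complementation `A ↦ Aᶜ` reverses inclusions, and it does so separately inside `X` and outside
`X`. Hence `S` is a pivot for `P` from below (it contains `P` on `X` and lies inside `P` off `X`)
exactly when `Sᶜ` is a pivot for `Pᶜ` from above, while `|Sᶜ ∩ X| = |X| - |S ∩ X|` and
`|Pᶜ| = N - |P|` turn the cardinality conditions of one side into those of the other.
-/

open Finset

namespace Finset

variable {α : Type*} [Fintype α] [DecidableEq α]

theorem inter_subset_inter_iff_compl (A B X : Finset α) :
    A ∩ X ⊆ B ∩ X ↔ Bᶜ ∩ X ⊆ Aᶜ ∩ X := by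
  simp only [subset_iff, mem_inter, mem_compl]
  exact ⟨fun h x hx => ⟨fun hA => hx.1 (h ⟨hA, hx.2⟩).1, hx.2⟩,
    fun h x hx => ⟨by_contra fun hB => (h ⟨hB, hx.2⟩).1 hx.1, hx.2⟩⟩

theorem sdiff_subset_sdiff_iff_compl (A B X : Finset α) :
    A \ X ⊆ B \ X ↔ Bᶜ \ X ⊆ Aᶜ \ X := by
  simpa only [sdiff_eq_inter_compl] using inter_subset_inter_iff_compl A B Xᶜ

theorem pivot_iff_compl (S P X : Finset α) :
    (P ∩ X ⊆ S ∩ X ∧ S \ X ⊆ P \ X) ↔ (Sᶜ ∩ X ⊆ Pᶜ ∩ X ∧ Pᶜ \ X ⊆ Sᶜ \ X) :=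
  and_congr (inter_subset_inter_iff_compl P S X) (sdiff_subset_sdiff_iff_compl S P X)

theorem card_compl_inter_add_card_inter (A X : Finset α) :
    #(Aᶜ ∩ X) + #(A ∩ X) = #X := by
  rw [inter_comm Aᶜ, ← sdiff_eq_inter_compl, inter_comm A]
  exact card_sdiff_add_card_inter X A

end Finset

theorem stmt10_general (n N : ℕ) (h60 : 60 ∣ n)
    (S₁ T₁ : Finset (Finset (Fin N)))
    (hno : ∀ S ∈ S₁, ∀ T ∈ T₁, ¬ S ⊆ T)
    (hpiv1 : ∀ P X : Finset (Fin N), P.card = n/3 → X.card = n → P ∩ X = ∅ →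
      ∃ S ∈ S₁, P ∩ X ⊆ S ∩ X ∧ S \ X ⊆ P \ X ∧ (S ∩ X).card ≤ n/3)
    (hpiv2 : ∀ P X : Finset (Fin N), 2 * P.card = N → X.card = n →
        (P ∩ X).card = 2*n/3 →
      ∃ T ∈ T₁, T ∩ X ⊆ P ∩ X ∧ P \ X ⊆ T \ X ∧ n/3 ≤ (T ∩ X).card) :
    (∀ S ∈ T₁.image (·ᶜ), ∀ T ∈ S₁.image (·ᶜ), ¬ S ⊆ T) ∧
    (∀ P X : Finset (Fin N), 2 * P.card = N → X.card = n → (P ∩ X).card = n/3 →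
      ∃ S ∈ T₁.image (·ᶜ), P ∩ X ⊆ S ∩ X ∧ S \ X ⊆ P \ X ∧ (S ∩ X).card ≤ 2*n/3) ∧
    (∀ P X : Finset (Fin N), P.card = N - n/3 → X.card = n → X ⊆ P →
      ∃ T ∈ S₁.image (·ᶜ), T ∩ X ⊆ P ∩ X ∧ P \ X ⊆ T \ X ∧ 2*n/3 ≤ (T ∩ X).card) := by
  have h3 : 3 ∣ n := dvd_trans (by norm_num) h60
  refine ⟨?_, ?_, ?_⟩
  · simp only [forall_mem_image]
    exact fun T hT S hS hsub => hno S hS T hT (compl_subset_compl.mp hsub)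
  · intro P X hP hX hPX
    have hPcard := card_compl P
    have hPXcard := card_compl_inter_add_card_inter P X
    rw [Fintype.card_fin] at hPcard
    obtain ⟨T, hT, hTX, hPT, hTcard⟩ := hpiv2 Pᶜ X (by omega) hX (by omega)
    obtain ⟨hPXT, hTP⟩ := (pivot_iff_compl Tᶜ P X).mpr (by rw [compl_compl]; exact ⟨hTX, hPT⟩)
    have hTXcard := card_compl_inter_add_card_inter T X
    exact ⟨Tᶜ, mem_image_of_mem _ hT, hPXT, hTP, by omega⟩
  · intro P X hP hX hXP
    have hPcard := card_compl P
    have hXN := X.card_le_univ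
    rw [Fintype.card_fin] at hPcard hXN
    have hPX : Pᶜ ∩ X = ∅ := disjoint_iff_inter_eq_empty.mp (disjoint_compl_left_iff.mpr hXP)
    obtain ⟨S, hS, hPS, hSP, hScard⟩ := hpiv1 Pᶜ X (by omega) hX hPX
    obtain ⟨hSX, hPXS⟩ := (pivot_iff_compl S Pᶜ X).mp ⟨hPS, hSP⟩
    rw [compl_compl] at hSX hPXS
    have hSXcard := card_compl_inter_add_card_inter S X
    exact ⟨Sᶜ, mem_image_of_mem _ hS, hSX, hPXS, by omega⟩

/-- Complementation: if `S₁ ⊆ [N]^(s)`, `T₁ ⊆ [N]^(t)` satisfy the pivot conditions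
of Lemma (pivot_points), then `S₂ = {[N]\T : T ∈ T₁}` and `T₂ = {[N]\S : S ∈ S₁}`
satisfy the dual pivot conditions of Lemma (above_pivots). -/
theorem stmt10 (n N : ℕ) (h60 : 60 ∣ n) (hN : 3 * N = 7 * n)
    (S₁ T₁ : Finset (Finset (Fin N)))
    (hS₁card : ∀ S ∈ S₁, S.card = 2*n/3)
    (hT₁card : ∀ T ∈ T₁, T.card = 2*n/3 + n/6 + n/20)
    (hno : ∀ S ∈ S₁, ∀ T ∈ T₁, ¬ S ⊆ T)
    (hpiv1 : ∀ P X : Finset (Fin N), P.card = n/3 → X.card = n → P ∩ X = ∅ →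
      ∃ S ∈ S₁, P ∩ X ⊆ S ∩ X ∧ S \ X ⊆ P \ X ∧ (S ∩ X).card ≤ n/3)
    (hpiv2 : ∀ P X : Finset (Fin N), 2 * P.card = N → X.card = n →
        (P ∩ X).card = 2*n/3 →
      ∃ T ∈ T₁, T ∩ X ⊆ P ∩ X ∧ P \ X ⊆ T \ X ∧ n/3 ≤ (T ∩ X).card) :
    (∀ S ∈ T₁.image (·ᶜ), ∀ T ∈ S₁.image (·ᶜ), ¬ S ⊆ T) ∧
    (∀ P X : Finset (Fin N), 2 * P.card = N → X.card = n → (P ∩ X).card = n/3 →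
      ∃ S ∈ T₁.image (·ᶜ), P ∩ X ⊆ S ∩ X ∧ S \ X ⊆ P \ X ∧ (S ∩ X).card ≤ 2*n/3) ∧
    (∀ P X : Finset (Fin N), P.card = N - n/3 → X.card = n → X ⊆ P →
      ∃ T ∈ S₁.image (·ᶜ), T ∩ X ⊆ P ∩ X ∧ P \ X ⊆ T \ X ∧ 2*n/3 ≤ (T ∩ X).card) :=
  stmt10_general n N h60 S₁ T₁ hno hpiv1 hpiv2
end
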